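/- arXiv:0809.4785 — 5 statements merged into one kernel-verified Lean document; each statement's English description precedes it below -/
import Mathlib

section
/- (Beilinson's Lemma) Let F : T → T' be a triangulated functor between triangulated categories and M a set of objects of T. If for all X, Y ∈ M and all integers i the map F : Hom_T(X, Y[i]) → Hom_{T'}(F(X), F(Y)[i]) is an isomorphism, then F restricts to a triangulated equivalence tria(M) → tria(F(M)), where tria(M) denotes the smallest strict full triangulated subcategory containing M. -/
/-!
The pairs `(X, Y)` on which `F` is bijective on `Hom(X, Y)` form a class closed under
isomorphisms and, since `F` commutes with shifts, under simultaneous shifts. By the five lemma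
applied to the long exact `Hom`-sequences of a distinguished triangle and of its image under `F`,
it is also closed under cones in either variable, as soon as it contains the shifts by `1` of the
two other vertices. Two nested inductions over `tria(M)` therefore show that `F` is fully
faithful on `tria(M)`. Essential surjectivity is an induction over `tria(F(M))`: a morphism
`F X₁ ⟶ F X₂` lifts by fullness, and `F` maps a cone of the lift to a cone of the given morphism.
-/

open CategoryTheory Limits Pretriangulated

/-- The smallest strictly full triangulated subcategory containing a set of
objects: closure under isomorphisms, shifts (by arbitrary integers) and cones
of distinguished triangles. -/
inductive TriaClosure {T : Type*} [Category T] [HasZeroObject T] [HasShift T ℤ]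
    [Preadditive T] [∀ n : ℤ, (shiftFunctor T n).Additive] [Pretriangulated T]
    (M : Set T) : T → Prop
  | of (X : T) (hX : X ∈ M) : TriaClosure M X
  | isoClosed (X Y : T) (e : X ≅ Y) (hX : TriaClosure M X) : TriaClosure M Y
  | shift (X : T) (n : ℤ) (hX : TriaClosure M X) : TriaClosure M (X⟦n⟧)
  | cone (Tr : Triangle T) (hTr : Tr ∈ distTriang T)
      (h₁ : TriaClosure M Tr.obj₁) (h₂ : TriaClosure M Tr.obj₂) :
      TriaClosure M Tr.obj₃

namespace CategoryTheory.Pretriangulated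

variable {C : Type*} [Category C] [Preadditive C] [HasZeroObject C] [HasShift C ℤ]
  [∀ n : ℤ, (shiftFunctor C n).Additive] [Pretriangulated C] {S : Triangle C}

lemma exact_rightComp_mor₁_mor₂ (hS : S ∈ distTriang C) (X : C) :
    Function.Exact (Preadditive.rightComp X S.mor₁) (Preadditive.rightComp X S.mor₂) := by
  intro g
  refine ⟨fun hg => ?_, ?_⟩
  · obtain ⟨f, rfl⟩ := Triangle.coyoneda_exact₂ S hS g hg
    exact ⟨f, rfl⟩
  · rintro ⟨f, rfl⟩
    simp [Preadditive.rightComp, comp_distTriang_mor_zero₁₂ S hS]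

lemma exact_leftComp_mor₂_mor₁ (hS : S ∈ distTriang C) (Y : C) :
    Function.Exact (Preadditive.leftComp Y S.mor₂) (Preadditive.leftComp Y S.mor₁) := by
  intro g
  refine ⟨fun hg => ?_, ?_⟩
  · obtain ⟨f, rfl⟩ := Triangle.yoneda_exact₂ S hS g hg
    exact ⟨f, rfl⟩
  · rintro ⟨f, rfl⟩
    simp [Preadditive.leftComp, reassoc_of% comp_distTriang_mor_zero₁₂ S hS]

end CategoryTheory.Pretriangulated

namespace CategoryTheory.Functor

variable {C D : Type*} [Category C] [Category D]

def MapBijective (F : C ⥤ D) (X Y : C) : Prop :=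
  Function.Bijective (F.map : (X ⟶ Y) → (F.obj X ⟶ F.obj Y))

variable {F : C ⥤ D}

lemma MapBijective.of_iso {X X' Y Y' : C} (h : F.MapBijective X Y) (e : X ≅ X') (e' : Y ≅ Y') :
    F.MapBijective X' Y' := by
  have hcomm : F.map ∘ e.homCongr e' = (F.mapIso e).homCongr (F.mapIso e') ∘ F.map := by
    funext f
    simp [Iso.homCongr]
  have := ((F.mapIso e).homCongr (F.mapIso e')).bijective.comp h
  rw [← hcomm] at this
  exact (Function.Bijective.of_comp_iff _ (e.homCongr e').bijective).1 this

lemma MapBijective.shift [HasShift C ℤ] [HasShift D ℤ] [F.CommShift ℤ] {X Y : C}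
    (h : F.MapBijective X Y) (n : ℤ) : F.MapBijective (X⟦n⟧) (Y⟦n⟧) := by
  have hcomm : ((F.commShiftIso n).app X).homCongr ((F.commShiftIso n).app Y) ∘ F.map ∘
      (shiftFunctor C n).map = (shiftFunctor D n).map ∘ F.map := by
    funext f
    simp [Iso.homCongr, F.commShiftIso_hom_naturality]
  have := ((FullyFaithful.ofFullyFaithful (shiftFunctor D n)).map_bijective _ _).comp h
  rw [← hcomm] at this
  exact (Function.Bijective.of_comp_iff _
    ((FullyFaithful.ofFullyFaithful (shiftFunctor C n)).map_bijective X Y)).1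
    ((Function.Bijective.of_comp_iff' (Equiv.bijective _) _).1 this)

section Triangulated

variable [Preadditive C] [HasZeroObject C] [HasShift C ℤ]
  [∀ n : ℤ, (shiftFunctor C n).Additive] [Pretriangulated C]
  [Preadditive D] [HasZeroObject D] [HasShift D ℤ]
  [∀ n : ℤ, (shiftFunctor D n).Additive] [Pretriangulated D]
  [F.CommShift ℤ] [F.IsTriangulated] {S : Triangle C}

open Preadditive

/-- The five lemma for the `Hom`-sequences out of `X` of `S`, `S.rotate`, `S.rotate.rotate`
(exact at their middle terms) and of their images under `F`. -/
lemma MapBijective.of_distTriang_right (hS : S ∈ distTriang C) {X : C}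
    (h₁ : F.MapBijective X S.obj₁) (h₂ : F.MapBijective X S.obj₂)
    (h₁' : F.MapBijective X (S.obj₁⟦(1 : ℤ)⟧)) (h₂' : F.MapBijective X (S.obj₂⟦(1 : ℤ)⟧)) :
    F.MapBijective X S.obj₃ :=
  have hS' := rot_of_distTriang _ hS
  have hS'' := rot_of_distTriang _ hS'
  AddMonoidHom.bijective_of_surjective_of_bijective_of_bijective_of_injective
    (rightComp X S.mor₁) (rightComp X S.mor₂) (rightComp X S.mor₃) (rightComp X (-S.mor₁⟦1⟧'))
    (rightComp (F.obj X) (F.map S.mor₁)) (rightComp (F.obj X) (F.map S.mor₂))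
    (rightComp (F.obj X) (F.map S.mor₃)) (rightComp (F.obj X) (F.map (-S.mor₁⟦1⟧')))
    F.mapAddHom F.mapAddHom F.mapAddHom F.mapAddHom F.mapAddHom
    (by ext; simp [rightComp]) (by ext; simp [rightComp]) (by ext; simp [rightComp])
    (by ext; simp [rightComp])
    (exact_rightComp_mor₁_mor₂ hS X) (exact_rightComp_mor₁_mor₂ hS' X)
    (exact_rightComp_mor₁_mor₂ hS'' X)
    (exact_rightComp_mor₁_mor₂ (F.map_distinguished _ hS) _)
    (exact_rightComp_mor₁_mor₂ (F.map_distinguished _ hS') _)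
    (exact_rightComp_mor₁_mor₂ (F.map_distinguished _ hS'') _)
    h₁.2 h₂ h₁' h₂'.1

lemma MapBijective.of_distTriang_left (hS : S ∈ distTriang C) {Y : C}
    (h₁ : F.MapBijective S.obj₁ Y) (h₂ : F.MapBijective S.obj₂ Y)
    (h₁' : F.MapBijective (S.obj₁⟦(1 : ℤ)⟧) Y) (h₂' : F.MapBijective (S.obj₂⟦(1 : ℤ)⟧) Y) :
    F.MapBijective S.obj₃ Y :=
  have hS' := rot_of_distTriang _ hS
  have hS'' := rot_of_distTriang _ hS'
  AddMonoidHom.bijective_of_surjective_of_bijective_of_bijective_of_injective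
    (leftComp Y (-S.mor₁⟦1⟧')) (leftComp Y S.mor₃) (leftComp Y S.mor₂) (leftComp Y S.mor₁)
    (leftComp (F.obj Y) (F.map (-S.mor₁⟦1⟧'))) (leftComp (F.obj Y) (F.map S.mor₃))
    (leftComp (F.obj Y) (F.map S.mor₂)) (leftComp (F.obj Y) (F.map S.mor₁))
    F.mapAddHom F.mapAddHom F.mapAddHom F.mapAddHom F.mapAddHom
    (by ext; simp [leftComp]) (by ext; simp [leftComp]) (by ext; simp [leftComp])
    (by ext; simp [leftComp])
    (exact_leftComp_mor₂_mor₁ hS'' Y) (exact_leftComp_mor₂_mor₁ hS' Y)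
    (exact_leftComp_mor₂_mor₁ hS Y)
    (exact_leftComp_mor₂_mor₁ (F.map_distinguished _ hS'') _)
    (exact_leftComp_mor₂_mor₁ (F.map_distinguished _ hS') _)
    (exact_leftComp_mor₂_mor₁ (F.map_distinguished _ hS) _)
    h₂'.2 h₁' h₂ h₁.1

end Triangulated

end CategoryTheory.Functor

namespace TriaClosure

variable {T T' : Type*} [Category T] [Category T']
  [HasZeroObject T] [HasShift T ℤ] [Preadditive T]
  [∀ n : ℤ, (shiftFunctor T n).Additive] [Pretriangulated T] [HasShift T' ℤ]
  {F : T ⥤ T'} [F.CommShift ℤ] {M : Set T}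

lemma mapBijective_shift_left {X : T} (hX : ∀ Y, TriaClosure M Y → F.MapBijective X Y) (k : ℤ)
    {Y : T} (hY : TriaClosure M Y) : F.MapBijective (X⟦k⟧) Y :=
  ((hX _ (shift Y (-k) hY)).shift k).of_iso (Iso.refl _)
    ((shiftFunctorCompIsoId T (-k) k (neg_add_cancel k)).app Y)

variable [HasZeroObject T'] [Preadditive T'] [∀ n : ℤ, (shiftFunctor T' n).Additive]
  [Pretriangulated T'] [F.IsTriangulated]

lemma map {X : T} (hX : TriaClosure M X) : TriaClosure (F.obj '' M) (F.obj X) := by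
  induction hX with
  | of X hX => exact of _ ⟨X, hX, rfl⟩
  | isoClosed X Y e _ ih => exact isoClosed _ _ (F.mapIso e) ih
  | shift X n _ ih => exact isoClosed _ _ ((F.commShiftIso n).app X).symm (shift _ n ih)
  | cone S hS _ _ ih₁ ih₂ => exact cone _ (F.map_distinguished S hS) ih₁ ih₂

lemma mapBijective_shift_right {X : T} (hX : ∀ Y ∈ M, ∀ n : ℤ, F.MapBijective X (Y⟦n⟧))
    {Y : T} (hY : TriaClosure M Y) (n : ℤ) : F.MapBijective X (Y⟦n⟧) := by
  induction hY generalizing n with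
  | of Y hY => exact hX Y hY n
  | isoClosed Y Y' e _ ih => exact (ih n).of_iso (Iso.refl X) ((shiftFunctor T n).mapIso e)
  | shift Y k _ ih => exact (ih (k + n)).of_iso (Iso.refl X) ((shiftFunctorAdd' T k n _ rfl).app Y)
  | cone S hS _ _ ih₁ ih₂ =>
    exact Functor.MapBijective.of_distTriang_right (Triangle.shift_distinguished S hS n)
      (ih₁ n) (ih₂ n)
      ((ih₁ (n + 1)).of_iso (Iso.refl X) ((shiftFunctorAdd' T n 1 _ rfl).app S.obj₁))
      ((ih₂ (n + 1)).of_iso (Iso.refl X) ((shiftFunctorAdd' T n 1 _ rfl).app S.obj₂))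

lemma mapBijective (hM : ∀ X ∈ M, ∀ Y ∈ M, ∀ n : ℤ, F.MapBijective X (Y⟦n⟧))
    {X Y : T} (hX : TriaClosure M X) (hY : TriaClosure M Y) : F.MapBijective X Y := by
  induction hX generalizing Y with
  | of X hX =>
    exact (mapBijective_shift_right (hM X hX) hY 0).of_iso (Iso.refl X)
      ((shiftFunctorZero T ℤ).app Y)
  | isoClosed X X' e _ ih => exact (ih hY).of_iso e (Iso.refl Y)
  | shift X k _ ih => exact mapBijective_shift_left (fun _ => ih) k hY
  | cone S hS _ _ ih₁ ih₂ =>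
    exact Functor.MapBijective.of_distTriang_left hS (ih₁ hY) (ih₂ hY)
      (mapBijective_shift_left (fun _ => ih₁) 1 hY) (mapBijective_shift_left (fun _ => ih₂) 1 hY)

lemma exists_map_iso
    (hF : ∀ X Y, TriaClosure M X → TriaClosure M Y → Function.Surjective (F.map : (X ⟶ Y) → _))
    {Z : T'} (hZ : TriaClosure (F.obj '' M) Z) :
    ∃ X : T, TriaClosure M X ∧ Nonempty (F.obj X ≅ Z) := by
  induction hZ with
  | of Z hZ =>
    obtain ⟨X, hX, rfl⟩ := hZ
    exact ⟨X, of X hX, ⟨Iso.refl _⟩⟩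
  | isoClosed Z Z' e _ ih =>
    obtain ⟨X, hX, ⟨e'⟩⟩ := ih
    exact ⟨X, hX, ⟨e' ≪≫ e⟩⟩
  | shift Z n _ ih =>
    obtain ⟨X, hX, ⟨e⟩⟩ := ih
    exact ⟨X⟦n⟧, shift X n hX, ⟨(F.commShiftIso n).app X ≪≫ (shiftFunctor T' n).mapIso e⟩⟩
  | cone S hS _ _ ih₁ ih₂ =>
    obtain ⟨X₁, hX₁, ⟨e₁⟩⟩ := ih₁
    obtain ⟨X₂, hX₂, ⟨e₂⟩⟩ := ih₂
    obtain ⟨φ, hφ⟩ := hF X₁ X₂ hX₁ hX₂ (e₁.hom ≫ S.mor₁ ≫ e₂.inv)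
    obtain ⟨X₃, _, _, hT⟩ := distinguished_cocone_triangle φ
    have hcomm : F.map φ ≫ e₂.hom = e₁.hom ≫ S.mor₁ := by simp [hφ]
    exact ⟨X₃, cone _ hT hX₁ hX₂, ⟨Triangle.π₃.mapIso
      (isoTriangleOfIso₁₂ _ _ (F.map_distinguished _ hT) hS e₁ e₂ hcomm)⟩⟩

end TriaClosure

theorem statement2 {T T' : Type*} [Category T] [Category T']
    [HasZeroObject T] [HasShift T ℤ] [Preadditive T]
    [∀ n : ℤ, (shiftFunctor T n).Additive] [Pretriangulated T]
    [HasZeroObject T'] [HasShift T' ℤ] [Preadditive T']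
    [∀ n : ℤ, (shiftFunctor T' n).Additive] [Pretriangulated T']
    (F : T ⥤ T') [F.CommShift ℤ] [F.IsTriangulated]
    (M : Set T)
    (h : ∀ X ∈ M, ∀ Y ∈ M, ∀ i : ℤ,
      Function.Bijective (fun f : X ⟶ Y⟦i⟧ =>
        F.map f ≫ (F.commShiftIso i).hom.app Y)) :
    -- `F` maps `tria(M)` into `tria(F(M))` and the induced functor
    -- `tria(M) ⥤ tria(F(M))` is an equivalence (of triangulated categories).
    ∃ hmap : ∀ X : T, TriaClosure M X → TriaClosure (F.obj '' M) (F.obj X),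
      (ObjectProperty.lift (TriaClosure (F.obj '' M))
        (ObjectProperty.ι (TriaClosure M) ⋙ F)
        (fun X => hmap X.1 X.2)).IsEquivalence := by
  have hM : ∀ X ∈ M, ∀ Y ∈ M, ∀ n : ℤ, F.MapBijective X (Y⟦n⟧) := fun X hX Y hY n =>
    (Function.Bijective.of_comp_iff' ((F.commShiftIso n).app Y).homToEquiv.bijective _).1
      (h X hX Y hY n)
  have hbij {X Y : T} (hX : TriaClosure M X) (hY : TriaClosure M Y) : F.MapBijective X Y :=
    TriaClosure.mapBijective hM hX hY
  refine ⟨fun X hX => hX.map (F := F), ?_⟩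
  have hff : (ObjectProperty.ι (TriaClosure M) ⋙ F).FullyFaithful :=
    (Functor.FullyFaithful.nonempty_iff_map_bijective _ |>.2
      fun (X Y : ObjectProperty.FullSubcategory (TriaClosure M)) =>
        (hbij X.2 Y.2).comp ((ObjectProperty.fullyFaithfulι _).map_bijective X Y)).some
  have := hff.full
  have := hff.faithful
  exact { essSurj := ⟨fun Z =>
    have ⟨X, hX, ⟨e⟩⟩ := TriaClosure.exists_map_iso (fun _ _ hX hY => (hbij hX hY).2) Z.2
    ⟨⟨X, hX⟩, ⟨ObjectProperty.isoMk _ e⟩⟩⟩ }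
end

section
/- Let A be an abelian k-category (k a field) which is artinian, has enough projectives, and satisfies End(L) = k for every simple object L. Let π : P ↠ A be an epimorphism, L a simple object, E = Ext¹(A, L) (assumed finite-dimensional), and let 0 → E* ⊗ L → M → A → 0 be the extension classified by id_E ∈ E* ⊗ E ≅ Ext¹(A, E* ⊗ L). Then any morphism π̃ : P → M lifting π (i.e. with c ∘ π̃ = π where c : M → A) is an epimorphism. -/
/-!
If `π̃` is not an epimorphism, its cokernel `Q` is nonzero. As `c ∘ π̃ = π` is an epimorphism, `Q`
is a quotient of the kernel `K ≅ L^{⊕ r}`, hence admits a nonzero map `φ : Q → L`. The composite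
`K → M → Q → L` is then a nonzero morphism `K → L` that extends to `M`, so it kills the extension
class, contradicting the injectivity of `Hom(K, L) → Ext¹(A, L)`.
-/

open CategoryTheory CategoryTheory.Limits CategoryTheory.Abelian

universe w v u

attribute [local instance] CategoryTheory.Abelian.hasFiniteBiproducts

namespace CategoryTheory

variable {C : Type u} [Category.{v} C] [Abelian C]

lemma Simple.exists_ne_zero_of_epi {L Q : C} [Simple L] (j : L ⟶ Q) [Epi j] (hQ : ¬ IsZero Q) :
    ∃ φ : Q ⟶ L, φ ≠ 0 := by
  have : IsIso j := isIso_of_epi_of_nonzero fun h => hQ (by subst h; exact IsZero.of_epi_zero L Q)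
  refine ⟨inv j, fun h => hQ ((IsZero.iff_id_eq_zero Q).2 ?_)⟩
  rw [← IsIso.inv_hom_id j, h, zero_comp]

lemma epi_biproduct_desc_castSucc_comp_cokernel_π {L Q : C} {n : ℕ}
    (p : (⨁ fun _ : Fin (n + 1) => L) ⟶ Q) [Epi p] :
    Epi (biproduct.desc fun i : Fin n => biproduct.ι (fun _ => L) i.castSucc ≫ p ≫
      cokernel.π (biproduct.ι (fun _ => L) (Fin.last n) ≫ p)) := by
  refine Preadditive.epi_of_cancel_zero _ fun {R} g hg => ?_
  suffices p ≫ cokernel.π _ ≫ g = 0 from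
    zero_of_epi_comp _ (zero_of_epi_comp p this)
  refine biproduct.hom_ext' _ _ fun b => ?_
  induction b using Fin.lastCases with
  | last => rw [← Category.assoc, cokernel.condition_assoc, zero_comp, comp_zero]
  | cast i => simpa using congrArg (biproduct.ι _ i ≫ ·) hg

lemma exists_ne_zero_of_epi_from_biproduct_simple {L : C} [Simple L] :
    ∀ {n : ℕ} {Q : C} (p : (⨁ fun _ : Fin n => L) ⟶ Q) [Epi p], ¬ IsZero Q →
      ∃ φ : Q ⟶ L, φ ≠ 0
  | 0, Q, p, _, hQ => by
    refine absurd (IsZero.of_epi p ?_) hQ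
    exact (IsZero.iff_id_eq_zero _).2 (biproduct.hom_ext' _ _ fun b => b.elim0)
  | n + 1, Q, p, _, hQ => by
    let j := biproduct.ι (fun _ => L) (Fin.last n) ≫ p
    by_cases hj : IsZero (cokernel j)
    · have : Epi j := Preadditive.epi_of_cokernel_zero (hj.eq_of_tgt _ _)
      exact Simple.exists_ne_zero_of_epi j hQ
    · have := epi_biproduct_desc_castSucc_comp_cokernel_π p
      obtain ⟨φ, hφ⟩ := exists_ne_zero_of_epi_from_biproduct_simple
        (biproduct.desc fun i : Fin n => biproduct.ι (fun _ => L) i.castSucc ≫ p ≫ cokernel.π j) hj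
      exact ⟨cokernel.π j ≫ φ, fun h => hφ (zero_of_epi_comp _ h)⟩

namespace ShortComplex

variable {S : ShortComplex C}

lemma Exact.epi_f_comp_cokernel_π (hS : S.Exact) [Epi S.g] {P : C} (f : P ⟶ S.X₂)
    [Epi (f ≫ S.g)] : Epi (S.f ≫ cokernel.π f) := by
  refine Preadditive.epi_of_cancel_zero _ fun {R} g hg => ?_
  let d := hS.desc (cokernel.π f ≫ g) (by simpa using hg)
  have hd : S.g ≫ d = cokernel.π f ≫ g := hS.g_desc _ _
  have : d = 0 := zero_of_epi_comp (f ≫ S.g) <| by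
    rw [Category.assoc, hd, cokernel.condition_assoc, zero_comp]
  exact zero_of_epi_comp (cokernel.π f) (by rw [← hd, this, comp_zero])

lemma ShortExact.f_comp_eq_zero_of_injective_extClass_comp [HasExt.{w} C] (hS : S.ShortExact)
    {L : C}
    (hinj : Function.Injective fun φ : S.X₁ ⟶ L => hS.extClass.comp (Ext.mk₀ φ) (add_zero 1))
    (ψ : S.X₂ ⟶ L) : S.f ≫ ψ = 0 :=
  hinj <| by
    simp only [← Ext.mk₀_comp_mk₀, hS.extClass_comp_assoc, Ext.mk₀_zero, Ext.comp_zero]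

end ShortComplex

end CategoryTheory

theorem statement5_general {C : Type u} [Category.{v} C] [Abelian C] [HasExt.{w} C]
    -- the data: an epimorphism `π : P ⟶ A`
    {P A : C} (π : P ⟶ A) (hπ : Epi π)
    -- a simple object `L`
    (L : C) (hL : Simple L)
    -- the extension `0 → K → M → A → 0` with `K ≅ L^{⊕ r} (≅ E* ⊗ L)` ...
    {K M : C} (i : K ⟶ M) (c : M ⟶ A) (w : i ≫ c = 0)
    (hSE : (ShortComplex.mk i c w).ShortExact)
    (r : ℕ) (eK : K ≅ ⨁ (fun _ : Fin r => L))
    -- ... classified by `id_E ∈ E* ⊗ E ≅ Ext¹(A, E* ⊗ L)`, i.e. pushing the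
    -- extension class forward along morphisms `K → L` gives a bijection
    -- `Hom(K, L) ≅ Ext¹(A, L) = E`:
    (hclass : Function.Bijective
      (fun φ : K ⟶ L => hSE.extClass.comp (Ext.mk₀ φ) (add_zero 1)))
    -- a lift `π̃` of `π`:
    (πt : P ⟶ M) (hlift : πt ≫ c = π) :
    Epi πt := by
  by_contra hne
  have hQ : ¬ IsZero (cokernel πt) := fun h =>
    hne (Preadditive.epi_of_cokernel_zero (h.eq_of_tgt _ _))
  have : Epi c := hSE.epi_g
  have : Epi (πt ≫ c) := hlift ▸ hπ
  have : Epi (i ≫ cokernel.π πt) := hSE.exact.epi_f_comp_cokernel_π πt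
  obtain ⟨φ, hφ⟩ :=
    exists_ne_zero_of_epi_from_biproduct_simple (eK.inv ≫ i ≫ cokernel.π πt) hQ
  have hφK : i ≫ cokernel.π πt ≫ φ = 0 :=
    hSE.f_comp_eq_zero_of_injective_extClass_comp hclass.injective _
  exact hφ (zero_of_epi_comp (i ≫ cokernel.π πt) (by rwa [Category.assoc]))

theorem statement5 {C : Type u} [Category.{v} C] [Abelian C] [HasExt.{w} C]
    (k : Type*) [Field k] [Linear k C]
    -- `C` is artinian (every object has finite length):
    (hart : ∀ X : C, IsArtinianObject X ∧ IsNoetherianObject X)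
    -- enough projectives:
    [EnoughProjectives C]
    -- `End(L') = k` for every simple object `L'`:
    (hEnd : ∀ L' : C, Simple L' → ∀ f : L' ⟶ L', ∃ c : k, f = c • 𝟙 L')
    -- the data: an epimorphism `π : P ⟶ A`
    {P A : C} (π : P ⟶ A) (hπ : Epi π)
    -- a simple object `L`
    (L : C) (hL : Simple L)
    -- the extension `0 → K → M → A → 0` with `K ≅ L^{⊕ r} (≅ E* ⊗ L)` ...
    {K M : C} (i : K ⟶ M) (c : M ⟶ A) (w : i ≫ c = 0)
    (hSE : (ShortComplex.mk i c w).ShortExact)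
    (r : ℕ) (eK : K ≅ ⨁ (fun _ : Fin r => L))
    -- ... classified by `id_E ∈ E* ⊗ E ≅ Ext¹(A, E* ⊗ L)`, i.e. pushing the
    -- extension class forward along morphisms `K → L` gives a bijection
    -- `Hom(K, L) ≅ Ext¹(A, L) = E`:
    (hclass : Function.Bijective
      (fun φ : K ⟶ L => hSE.extClass.comp (Ext.mk₀ φ) (add_zero 1)))
    -- a lift `π̃` of `π`:
    (πt : P ⟶ M) (hlift : πt ≫ c = π) :
    Epi πt :=
  statement5_general π hπ L hL i c w hSE r eK hclass πt hlift
end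

section
/- Let A = (⊕_{i≥0} A^i, d=0) and B be positively graded dg algebras with zero differential whose degree-zero parts are finite products of division rings, and let φ : A → B be a dg algebra morphism such that φ⁰ : A⁰ → B⁰ is an isomorphism. If I is an integer segment and φ^i is an isomorphism for all i ≤ |I| + 2, then extension of scalars ? ⊗^L_A B : dgPer^I(A) → dgPer^I(B) is an equivalence of categories. -/
/-!
STATEMENT 13: Let `A = (⊕_{i≥0} A^i, d = 0)` and `B` be positively graded dg
algebras with zero differential whose degree-zero parts are finite products of
division rings, and `φ : A → B` a dg algebra morphism with `φ⁰ : A⁰ → B⁰` an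
isomorphism.  If `I = [a,b]` is an integer segment and `φ^i` is an isomorphism
for all `i ≤ |I| + 2`, then extension of scalars
`? ⊗^L_A B : dgPer^I(A) → dgPer^I(B)` is an equivalence of categories.

Following the paper's proof (and its Theorem on filtered dg modules), objects
of `dgPer^I` are represented by their `dgFilt` presentations: finite systems
of generators `{l_k} e_{v_k} A` (with idempotents `v_k` and shifts `l_k`,
`a ≤ -l_k ≤ b` for the window `I = [a,b]`) together with a matrix differential
`x` with `x² = 0`; morphisms are matrices, and morphisms in the derived
category are matrices modulo homotopy.  Extension of scalars applies `φ` to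
all matrix entries.  The equivalence is expressed as: this operation is
(1) essentially surjective (every presentation over `B` in the window lifts
to one over `A`), (2) full and (3) faithful on homotopy classes of morphisms.
-/

/-- A (ℤ-)graded algebra, componentwise (a positively graded dg algebra with
zero differential is exactly such a graded algebra supported in nonnegative
degrees). -/
structure GrAlg where
  R : ℤ → Type
  [acg : ∀ n, AddCommGroup (R n)]
  mul : ∀ {m n p : ℤ}, m + n = p → R m → R n → R p
  one : R 0
  mul_add : ∀ {m n p : ℤ} (h : m + n = p) (a : R m) (b c : R n),
    mul h a (b + c) = mul h a b + mul h a c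
  add_mul : ∀ {m n p : ℤ} (h : m + n = p) (a b : R m) (c : R n),
    mul h (a + b) c = mul h a c + mul h b c
  assoc : ∀ {m n p s t q : ℤ} (h1 : m + n = s) (h2 : s + p = q)
    (h3 : n + p = t) (h4 : m + t = q) (a : R m) (b : R n) (c : R p),
    mul h2 (mul h1 a b) c = mul h4 a (mul h3 b c)
  one_mul : ∀ {n : ℤ} (a : R n), mul (zero_add n) one a = a
  mul_one : ∀ {n : ℤ} (a : R n), mul (add_zero n) a one = a

attribute [instance] GrAlg.acg

namespace GrAlg

variable (A : GrAlg)

/-- positively graded -/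
def Pos : Prop := ∀ n : ℤ, n < 0 → Subsingleton (A.R n)

variable {A}

lemma mul_zero' {m n p : ℤ} (h : m + n = p) (a : A.R m) :
    A.mul h a (0 : A.R n) = 0 := by
  have h0 := A.mul_add h a 0 0
  rw [add_zero] at h0
  exact left_eq_add.mp h0

lemma zero_mul' {m n p : ℤ} (h : m + n = p) (c : A.R n) :
    A.mul h (0 : A.R m) c = 0 := by
  have h0 := A.add_mul h 0 0 c
  rw [add_zero] at h0
  exact left_eq_add.mp h0

lemma mul_neg' {m n p : ℤ} (h : m + n = p) (a : A.R m) (b : A.R n) :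
    A.mul h a (-b) = -A.mul h a b := by
  have h0 := A.mul_add h a b (-b)
  rw [add_neg_cancel, mul_zero'] at h0
  exact (neg_eq_of_add_eq_zero_right h0.symm).symm

end GrAlg

/-- A complete system of orthogonal idempotents of `A⁰` exhibiting `A⁰` as a
finite product of division rings. -/
structure IdemData (A : GrAlg) (ι : Type) [Fintype ι] where
  e : ι → A.R 0
  idem : ∀ x, A.mul (zero_add 0) (e x) (e x) = e x
  orth : ∀ x y, x ≠ y → A.mul (zero_add 0) (e x) (e y) = 0
  sum_one : ∑ x, e x = A.one
  /-- `e_x A⁰ e_y = 0` for `x ≠ y` -/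
  offdiag : ∀ x y, x ≠ y → ∀ a : A.R 0,
    A.mul (zero_add 0) (e x) (A.mul (add_zero 0) a (e y)) = 0
  /-- each `e_x A⁰ e_x` is a division ring -/
  div : ∀ (x : ι) (a : A.R 0),
    A.mul (zero_add 0) (e x) (A.mul (add_zero 0) a (e x)) = a → a ≠ 0 →
    ∃ b : A.R 0, A.mul (zero_add 0) (e x) (A.mul (add_zero 0) b (e x)) = b ∧
      A.mul (zero_add 0) a b = e x ∧ A.mul (zero_add 0) b a = e x

namespace IdemData

variable {A : GrAlg} {ι : Type} [Fintype ι] (E : IdemData A ι)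

/-- The block `e_x A^m e_y`, as an additive subgroup of `A^m`. -/
def blkSubgroup (m : ℤ) (x y : ι) : AddSubgroup (A.R m) where
  carrier := {r | A.mul (zero_add m) (E.e x) r = r ∧ A.mul (add_zero m) r (E.e y) = r}
  add_mem' := by
    rintro a b ⟨ha1, ha2⟩ ⟨hb1, hb2⟩
    constructor
    · rw [A.mul_add, ha1, hb1]
    · rw [A.add_mul, ha2, hb2]
  zero_mem' := by
    constructor
    · exact GrAlg.mul_zero' _ _
    · exact GrAlg.zero_mul' _ _
  neg_mem' := by
    rintro a ⟨ha1, ha2⟩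
    constructor
    · rw [GrAlg.mul_neg', ha1]
    · show A.mul (add_zero m) (-a) (E.e y) = -a
      have h0 := A.add_mul (add_zero m) a (-a) (E.e y)
      rw [add_neg_cancel, GrAlg.zero_mul'] at h0
      rw [(neg_eq_of_add_eq_zero_right h0.symm).symm, ha2]

/-- An element of the block `e_x A^m e_y`. -/
abbrev Blk (m : ℤ) (x y : ι) : Type := ↥(E.blkSubgroup m x y)

/-- Multiplication of block elements. -/
def blkMul {m n p : ℤ} (h : m + n = p) {x y z : ι}
    (a : E.Blk m x y) (b : E.Blk n y z) : E.Blk p x z := by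
  refine ⟨A.mul h a.1 b.1, ?_, ?_⟩
  · rw [← A.assoc (zero_add m) h h (zero_add p) (E.e x) a.1 b.1, a.2.1]
  · rw [A.assoc h (add_zero p) (add_zero n) h a.1 b.1 (E.e z), b.2.2]

/-- Transport of a block element along an equality of degrees. -/
def castBlk {m m' : ℤ} (h : m = m') {x y : ι} (a : E.Blk m x y) : E.Blk m' x y :=
  h ▸ a

end IdemData

/-- A `dgFilt` presentation of an object of `dgPer(A)`: a dg module which, as
a graded module, is `⊕_k {l_k} e_{v_k} A` with a (strictly triangular) matrix
differential `x` of square zero; the shifts `l` are decreasing, giving the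
filtration with subquotients `{l_k} e_{v_k} A`. -/
structure DGData {ι : Type} [Fintype ι] {A : GrAlg} (E : IdemData A ι) where
  s : ℕ
  v : Fin s → ι
  l : Fin s → ℤ
  lanti : ∀ i j : Fin s, i ≤ j → l j ≤ l i
  x : ∀ i j : Fin s, E.Blk (l i + 1 - l j) (v i) (v j)
  tri : ∀ i j : Fin s, j ≤ i → x i j = 0
  x_sq : ∀ i j : Fin s,
    (∑ k : Fin s, E.blkMul
      (show (l i + 1 - l k) + (l k + 1 - l j) = l i + 2 - l j by omega)
      (x i k) (x k j)) = 0

namespace DGData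

variable {ι : Type} [Fintype ι] {A : GrAlg} {E : IdemData A ι}

/-- The presentation lies in the window `dgPer^{[a,b]}`: it is generated in
degrees `-l_k ∈ [a, b]`. -/
def InWindow (X : DGData E) (a b : ℤ) : Prop :=
  ∀ k : Fin X.s, a ≤ -X.l k ∧ -X.l k ≤ b

/-- A morphism of dg modules in terms of presentations: a matrix commuting
with the differentials. -/
structure Map (X Y : DGData E) where
  f : ∀ (i : Fin Y.s) (j : Fin X.s), E.Blk (Y.l i - X.l j) (Y.v i) (X.v j)
  comm : ∀ (i : Fin Y.s) (j : Fin X.s),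
    (∑ k : Fin Y.s, E.blkMul
        (show (Y.l i + 1 - Y.l k) + (Y.l k - X.l j) = Y.l i + 1 - X.l j by omega)
        (Y.x i k) (f k j)) =
    (∑ k : Fin X.s, E.blkMul
        (show (Y.l i - X.l k) + (X.l k + 1 - X.l j) = Y.l i + 1 - X.l j by omega)
        (f i k) (X.x k j))

/-- Two morphisms are homotopic if their difference is `y ∘ h + h ∘ x` for a
degree `-1` matrix `h`. -/
def Homotopic {X Y : DGData E} (f g : Map X Y) : Prop :=
  ∃ h : ∀ (i : Fin Y.s) (j : Fin X.s), E.Blk (Y.l i - 1 - X.l j) (Y.v i) (X.v j),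
    ∀ (i : Fin Y.s) (j : Fin X.s),
      f.f i j - g.f i j =
        (∑ k : Fin Y.s, E.blkMul
          (show (Y.l i + 1 - Y.l k) + (Y.l k - 1 - X.l j) = Y.l i - X.l j by omega)
          (Y.x i k) (h k j))
        + (∑ k : Fin X.s, E.blkMul
          (show (Y.l i - 1 - X.l k) + (X.l k + 1 - X.l j) = Y.l i - X.l j by omega)
          (h i k) (X.x k j))

/-- The entries of the identity morphism. -/
def idEntry (X : DGData E) (i j : Fin X.s) : E.Blk (X.l i - X.l j) (X.v i) (X.v j) :=
  if h : i = j then by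
    subst h
    exact E.castBlk (by omega) ⟨E.e (X.v i), E.idem _, E.idem _⟩
  else 0

/-- The composite matrix of two morphisms. -/
def compEntry {X Y Z : DGData E} (f : Map X Y) (g : Map Y Z)
    (i : Fin Z.s) (j : Fin X.s) : E.Blk (Z.l i - X.l j) (Z.v i) (X.v j) :=
  ∑ k : Fin Y.s, E.blkMul
    (show (Z.l i - Y.l k) + (Y.l k - X.l j) = Z.l i - X.l j by omega)
    (g.f i k) (f.f k j)

end DGData

/-- A morphism of graded algebras (a dg algebra morphism between dg algebras
with zero differential). -/
structure GrHom (A B : GrAlg) where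
  f : ∀ n, A.R n →+ B.R n
  f_one : f 0 A.one = B.one
  f_mul : ∀ {m n p : ℤ} (h : m + n = p) (a : A.R m) (b : A.R n),
    f p (A.mul h a b) = B.mul h (f m a) (f n b)

namespace GrHom

variable {A B : GrAlg} {ι : Type} [Fintype ι]
  {EA : IdemData A ι} {EB : IdemData B ι}

/-- `φ` applied to a block element, given that `φ` matches the idempotents. -/
def mapBlk (φ : GrHom A B) (hφe : ∀ x, φ.f 0 (EA.e x) = EB.e x)
    {m : ℤ} {x y : ι} (a : EA.Blk m x y) : EB.Blk m x y := by
  refine ⟨φ.f m a.1, ?_, ?_⟩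
  · rw [← hφe, ← φ.f_mul, a.2.1]
  · rw [← hφe, ← φ.f_mul, a.2.2]

lemma mapBlk_mul (φ : GrHom A B) (hφe : ∀ x, φ.f 0 (EA.e x) = EB.e x)
    {m n p : ℤ} (h : m + n = p) {x y z : ι} (a : EA.Blk m x y) (b : EA.Blk n y z) :
    φ.mapBlk hφe (EA.blkMul h a b) = EB.blkMul h (φ.mapBlk hφe a) (φ.mapBlk hφe b) :=
  Subtype.ext (φ.f_mul h a.1 b.1)

lemma mapBlk_addHom (φ : GrHom A B) (hφe : ∀ x, φ.f 0 (EA.e x) = EB.e x)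
    {m : ℤ} {x y : ι} (a b : EA.Blk m x y) :
    φ.mapBlk hφe (a + b) = φ.mapBlk hφe a + φ.mapBlk hφe b :=
  Subtype.ext (map_add (φ.f m) a.1 b.1)

/-- `mapBlk` as an additive monoid morphism. -/
def mapBlkHom (φ : GrHom A B) (hφe : ∀ x, φ.f 0 (EA.e x) = EB.e x)
    (m : ℤ) (x y : ι) : EA.Blk m x y →+ EB.Blk m x y where
  toFun := φ.mapBlk hφe
  map_zero' := Subtype.ext (map_zero (φ.f m))
  map_add' := φ.mapBlk_addHom hφe

@[simp] lemma mapBlkHom_apply (φ : GrHom A B) (hφe : ∀ x, φ.f 0 (EA.e x) = EB.e x)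
    {m : ℤ} {x y : ι} (a : EA.Blk m x y) :
    φ.mapBlkHom hφe m x y a = φ.mapBlk hφe a := rfl

/-- Extension of scalars of a presentation along `φ`: apply `φ` to all the
entries of the matrix differential. -/
def mapData (φ : GrHom A B) (hφe : ∀ x, φ.f 0 (EA.e x) = EB.e x)
    (X : DGData EA) : DGData EB where
  s := X.s
  v := X.v
  l := X.l
  lanti := X.lanti
  x i j := φ.mapBlk hφe (X.x i j)
  tri i j hij := by
    show φ.mapBlk hφe (X.x i j) = 0
    rw [X.tri i j hij]
    exact Subtype.ext (map_zero (φ.f _))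
  x_sq i j := by
    have h2 := congrArg (φ.mapBlkHom hφe (X.l i + 2 - X.l j) (X.v i) (X.v j)) (X.x_sq i j)
    rw [map_sum, map_zero] at h2
    rw [← h2]
    refine Finset.sum_congr rfl fun k _ => ?_
    rw [mapBlkHom_apply, φ.mapBlk_mul hφe]

/-- Extension of scalars of a morphism of presentations along `φ`. -/
def mapMap (φ : GrHom A B) (hφe : ∀ x, φ.f 0 (EA.e x) = EB.e x)
    {X Y : DGData EA} (f : DGData.Map X Y) :
    DGData.Map (φ.mapData hφe X) (φ.mapData hφe Y) where
  f i j := φ.mapBlk hφe (f.f i j)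
  comm i j := by
    have hA := congrArg (φ.mapBlkHom hφe (Y.l i + 1 - X.l j) (Y.v i) (X.v j)) (f.comm i j)
    rw [map_sum, map_sum] at hA
    have l1 : (∑ k : Fin Y.s, EB.blkMul
        (show (Y.l i + 1 - Y.l k) + (Y.l k - X.l j) = Y.l i + 1 - X.l j by omega)
        (φ.mapBlk hφe (Y.x i k)) (φ.mapBlk hφe (f.f k j))) =
        ∑ k : Fin Y.s, φ.mapBlkHom hφe (Y.l i + 1 - X.l j) (Y.v i) (X.v j)
          (EA.blkMul (show (Y.l i + 1 - Y.l k) + (Y.l k - X.l j) = Y.l i + 1 - X.l j by omega)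
            (Y.x i k) (f.f k j)) :=
      Finset.sum_congr rfl fun k _ => by rw [mapBlkHom_apply, φ.mapBlk_mul hφe]
    have l2 : (∑ k : Fin X.s, EB.blkMul
        (show (Y.l i - X.l k) + (X.l k + 1 - X.l j) = Y.l i + 1 - X.l j by omega)
        (φ.mapBlk hφe (f.f i k)) (φ.mapBlk hφe (X.x k j))) =
        ∑ k : Fin X.s, φ.mapBlkHom hφe (Y.l i + 1 - X.l j) (Y.v i) (X.v j)
          (EA.blkMul (show (Y.l i - X.l k) + (X.l k + 1 - X.l j) = Y.l i + 1 - X.l j by omega)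
            (f.f i k) (X.x k j)) :=
      Finset.sum_congr rfl fun k _ => by rw [mapBlkHom_apply, φ.mapBlk_mul hφe]
    exact l1.trans (hA.trans l2.symm)

end GrHom

/-!
All entries of the matrices involved (differentials, their squares, morphisms, the composites
`y ∘ f`, `f ∘ x`, and homotopies) between generators in the window `[a, b]` live in degrees at
most `b - a + 2`. There `φ` is bijective, hence so is its restriction to each block
`e_x A^m e_y` (as `φ` matches the idempotents). Thus every matrix over `B` lifts entrywise to
`A`, and the identities it satisfies lift along the injective `φ`.
-/

lemma DGData.InWindow.sub_le {ι : Type} [Fintype ι] {A : GrAlg} {E : IdemData A ι}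
    {X Y : DGData E} {a b : ℤ} (hX : X.InWindow a b) (hY : Y.InWindow a b)
    (i : Fin Y.s) (j : Fin X.s) : Y.l i - X.l j ≤ b - a := by
  linarith [hX j, hY i]

namespace GrHom

variable {A B : GrAlg} {ι : Type} [Fintype ι] {EA : IdemData A ι} {EB : IdemData B ι}
  (φ : GrHom A B) (hφe : ∀ x, φ.f 0 (EA.e x) = EB.e x) {N : ℤ}

@[simp] lemma mapBlk_zero {m : ℤ} {x y : ι} : φ.mapBlk hφe (0 : EA.Blk m x y) = 0 :=
  map_zero (φ.mapBlkHom hφe m x y)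

lemma mapBlk_sub {m : ℤ} {x y : ι} (u w : EA.Blk m x y) :
    φ.mapBlk hφe (u - w) = φ.mapBlk hφe u - φ.mapBlk hφe w :=
  map_sub (φ.mapBlkHom hφe m x y) u w

lemma mapBlk_sum {κ : Type} (s : Finset κ) {m : ℤ} {x y : ι} (g : κ → EA.Blk m x y) :
    φ.mapBlk hφe (∑ k ∈ s, g k) = ∑ k ∈ s, φ.mapBlk hφe (g k) :=
  map_sum (φ.mapBlkHom hφe m x y) g s

lemma mapBlk_bijective {m : ℤ} (hm : Function.Bijective (φ.f m)) {x y : ι} :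
    Function.Bijective (φ.mapBlk hφe : EA.Blk m x y → EB.Blk m x y) := by
  refine ⟨fun u w huw => Subtype.ext (hm.1 (congrArg Subtype.val huw)), fun w => ?_⟩
  obtain ⟨u, hu⟩ := hm.2 w.1
  -- `u` lies in the block because `φ` is injective and `φ (e_x u) = e_x w = w`.
  refine ⟨⟨u, hm.1 ?_, hm.1 ?_⟩, Subtype.ext hu⟩
  · rw [φ.f_mul, hφe, hu]
    exact w.2.1
  · rw [φ.f_mul, hφe, hu]
    exact w.2.2

noncomputable def liftBlk {m : ℤ} (hm : Function.Bijective (φ.f m)) {x y : ι}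
    (w : EB.Blk m x y) : EA.Blk m x y :=
  Function.surjInv (φ.mapBlk_bijective hφe hm).2 w

@[simp] lemma mapBlk_liftBlk {m : ℤ} (hm : Function.Bijective (φ.f m)) {x y : ι}
    (w : EB.Blk m x y) : φ.mapBlk hφe (φ.liftBlk hφe hm w) = w :=
  Function.surjInv_eq _ w

theorem exists_mapData_eq (hN : ∀ n ≤ N, Function.Bijective (φ.f n)) (Z : DGData EB)
    (hZ : ∀ i j, Z.l i + 2 - Z.l j ≤ N) :
    ∃ X : DGData EA, φ.mapData hφe X = Z := by
  obtain ⟨s, v, l, lanti, z, tri, z_sq⟩ := Z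
  have hdeg (i j : Fin s) : l i + 1 - l j ≤ N := by linarith [hZ i j]
  let x (i j : Fin s) := φ.liftBlk hφe (hN _ (hdeg i j)) (z i j)
  refine ⟨⟨s, v, l, lanti, x, fun i j hij => ?_, fun i j => ?_⟩, ?_⟩
  · apply (φ.mapBlk_bijective hφe (hN _ (hdeg i j))).1
    simp only [x, mapBlk_liftBlk, tri i j hij, mapBlk_zero]
  · apply (φ.mapBlk_bijective hφe (hN _ (hZ i j))).1
    simp only [x, mapBlk_sum, mapBlk_mul, mapBlk_liftBlk, mapBlk_zero, z_sq i j]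
  · simp only [mapData, x, mapBlk_liftBlk]

theorem exists_mapMap_eq (hN : ∀ n ≤ N, Function.Bijective (φ.f n)) {X Y : DGData EA}
    (hXY : ∀ i j, Y.l i + 1 - X.l j ≤ N)
    (F : DGData.Map (φ.mapData hφe X) (φ.mapData hφe Y)) :
    ∃ f : DGData.Map X Y, φ.mapMap hφe f = F := by
  obtain ⟨F, F_comm⟩ := F
  have hdeg (i : Fin Y.s) (j : Fin X.s) : Y.l i - X.l j ≤ N := by linarith [hXY i j]
  let f (i : Fin Y.s) (j : Fin X.s) : EA.Blk (Y.l i - X.l j) (Y.v i) (X.v j) :=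
    φ.liftBlk hφe (hN _ (hdeg i j)) (F i j)
  have hf (i j) : φ.mapBlk hφe (f i j) = F i j := φ.mapBlk_liftBlk hφe _ _
  refine ⟨⟨f, fun i j => ?_⟩, ?_⟩
  · apply (φ.mapBlk_bijective hφe (hN _ (hXY i j))).1
    simp only [mapBlk_sum, mapBlk_mul, hf]
    exact F_comm i j
  · simp only [mapMap]
    congr 1
    exact funext₂ hf

theorem homotopic_of_homotopic_mapMap (hN : ∀ n ≤ N, Function.Bijective (φ.f n))
    {X Y : DGData EA} (hXY : ∀ i j, Y.l i - X.l j ≤ N) {f g : DGData.Map X Y}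
    (hfg : DGData.Homotopic (φ.mapMap hφe f) (φ.mapMap hφe g)) : DGData.Homotopic f g := by
  obtain ⟨H, hH⟩ := hfg
  have hdeg (i : Fin Y.s) (j : Fin X.s) : Y.l i - 1 - X.l j ≤ N := by linarith [hXY i j]
  let h (i : Fin Y.s) (j : Fin X.s) : EA.Blk (Y.l i - 1 - X.l j) (Y.v i) (X.v j) :=
    φ.liftBlk hφe (hN _ (hdeg i j)) (H i j)
  have hh (i j) : φ.mapBlk hφe (h i j) = H i j := φ.mapBlk_liftBlk hφe _ _
  refine ⟨h, fun i j => ?_⟩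
  apply (φ.mapBlk_bijective hφe (hN _ (hXY i j))).1
  simp only [mapBlk_sub, mapBlk_addHom, mapBlk_sum, mapBlk_mul, hh]
  exact hH i j

end GrHom

theorem statement13_general {A B : GrAlg}
    -- degree zero parts are (the same) finite product of division rings:
    {ι : Type} [Fintype ι]
    (EA : IdemData A ι) (EB : IdemData B ι)
    -- the dg algebra morphism `φ`, with `φ⁰` an isomorphism (matching the
    -- idempotent decompositions):
    (φ : GrHom A B) (hφe : ∀ x, φ.f 0 (EA.e x) = EB.e x)
    -- the segment `I = [a, b]`:
    (a b : ℤ)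
    -- `φ` is an isomorphism up to degree `|I| + 2`:
    (hiso : ∀ n : ℤ, n ≤ (b - a) + 2 → Function.Bijective (φ.f n)) :
    -- conclusion: extension of scalars `? ⊗^L_A B : dgPer^I(A) → dgPer^I(B)`
    -- is an equivalence of categories, expressed on `dgFilt` presentations:
    -- (1) essentially surjective:
    (∀ Z : DGData EB, Z.InWindow a b →
      ∃ X : DGData EA, X.InWindow a b ∧ φ.mapData hφe X = Z)
    -- (2) full (on homotopy categories, hence on derived categories):
    ∧ (∀ X Y : DGData EA, X.InWindow a b → Y.InWindow a b →
        ∀ F : DGData.Map (φ.mapData hφe X) (φ.mapData hφe Y),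
          ∃ f : DGData.Map X Y, φ.mapMap hφe f = F)
    -- (3) faithful:
    ∧ (∀ X Y : DGData EA, X.InWindow a b → Y.InWindow a b →
        ∀ f g : DGData.Map X Y,
          DGData.Homotopic (φ.mapMap hφe f) (φ.mapMap hφe g) →
            DGData.Homotopic f g) := by
  refine ⟨fun Z hZ => ?_, fun X Y hX hY F => ?_, fun X Y hX hY f g => ?_⟩
  · obtain ⟨X, rfl⟩ := φ.exists_mapData_eq hφe hiso Z fun i j => by linarith [hZ.sub_le hZ i j]
    exact ⟨X, hZ, rfl⟩
  · exact φ.exists_mapMap_eq hφe hiso (fun i j => by linarith [hX.sub_le hY i j]) F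
  · exact φ.homotopic_of_homotopic_mapMap hφe hiso fun i j => by linarith [hX.sub_le hY i j]

theorem statement13 {A B : GrAlg}
    -- positively graded dg algebras with zero differential:
    (hApos : A.Pos) (hBpos : B.Pos)
    -- degree zero parts are (the same) finite product of division rings:
    {ι : Type} [Fintype ι]
    (EA : IdemData A ι) (EB : IdemData B ι)
    -- the dg algebra morphism `φ`, with `φ⁰` an isomorphism (matching the
    -- idempotent decompositions):
    (φ : GrHom A B) (hφe : ∀ x, φ.f 0 (EA.e x) = EB.e x)
    (hφ0 : Function.Bijective (φ.f 0))
    -- the segment `I = [a, b]`: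
    (a b : ℤ) (hab : a ≤ b)
    -- `φ` is an isomorphism up to degree `|I| + 2`:
    (hiso : ∀ n : ℤ, n ≤ (b - a) + 2 → Function.Bijective (φ.f n)) :
    -- conclusion: extension of scalars `? ⊗^L_A B : dgPer^I(A) → dgPer^I(B)`
    -- is an equivalence of categories, expressed on `dgFilt` presentations:
    -- (1) essentially surjective:
    (∀ Z : DGData EB, Z.InWindow a b →
      ∃ X : DGData EA, X.InWindow a b ∧ φ.mapData hφe X = Z)
    -- (2) full (on homotopy categories, hence on derived categories):
    ∧ (∀ X Y : DGData EA, X.InWindow a b → Y.InWindow a b →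
        ∀ F : DGData.Map (φ.mapData hφe X) (φ.mapData hφe Y),
          ∃ f : DGData.Map X Y, φ.mapMap hφe f = F)
    -- (3) faithful:
    ∧ (∀ X Y : DGData EA, X.InWindow a b → Y.InWindow a b →
        ∀ f g : DGData.Map X Y,
          DGData.Homotopic (φ.mapMap hφe f) (φ.mapMap hφe g) →
            DGData.Homotopic f g) :=
  statement13_general EA EB φ hφe a b hiso
end

section
/- Let (ν_n) : ((C_n),(F_n)) → ((D_n),(G_n)) be a morphism of sequences of I-filtered categories (I a directed poset), where both sequences have inverse limits that are unions of their filtered pieces, and the first sequence satisfies: for each I there is N_I such that F_n^I is an equivalence for n ≥ N_I. If for every I ∈ I there is N such that ν_n^I : C_n^I → D_n^I is an equivalence for all n ≥ N, then lim ν_n : lim C_n → lim D_n is an equivalence of categories. -/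
/-!
STATEMENT 16: Let `(ν_n) : ((C_n),(F_n)) → ((D_n),(G_n))` be a morphism of
sequences of `I`-filtered categories (`I` a directed poset), where both
sequences have inverse limits that are unions of their filtered pieces, and
the first sequence satisfies: for each `I` there is `N_I` such that `F_n^I` is
an equivalence for all `n ≥ N_I`.  If for every `I` there is `N` such that
`ν_n^I : C_n^I → D_n^I` is an equivalence for all `n ≥ N`, then
`lim ν_n : lim C_n → lim D_n` is an equivalence of categories.
-/

open CategoryTheory

universe v u

/-- The inverse limit of a sequence of categories: objects are sequences of
objects together with compatibility isomorphisms. -/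
structure InvLim {C : ℕ → Type u} [∀ n, Category.{v} (C n)]
    (F : ∀ n, C (n + 1) ⥤ C n) where
  obj : ∀ n, C n
  iso : ∀ n, (F n).obj (obj (n + 1)) ≅ obj n

namespace InvLim

variable {C : ℕ → Type u} [∀ n, Category.{v} (C n)] {F : ∀ n, C (n + 1) ⥤ C n}

instance : Category (InvLim F) where
  Hom M N := {α : ∀ n, M.obj n ⟶ N.obj n //
    ∀ n, (F n).map (α (n + 1)) ≫ (N.iso n).hom = (M.iso n).hom ≫ α n}
  id M := ⟨fun _ => 𝟙 _, fun n => by simp⟩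
  comp {M N P} α β := ⟨fun n => α.1 n ≫ β.1 n, fun n => by
    rw [Functor.map_comp, Category.assoc, β.2 n, ← Category.assoc, α.2 n, Category.assoc]⟩
  id_comp f := Subtype.ext (funext fun n => Category.id_comp _)
  comp_id f := Subtype.ext (funext fun n => Category.comp_id _)
  assoc f g h := Subtype.ext (funext fun n => Category.assoc _ _ _)

end InvLim

/-- The functor between inverse limits induced by a morphism of sequences of
categories `(ν_n)`, with commutativity isomorphisms `comm`. -/
def limFunctor {C D : ℕ → Type u} [∀ n, Category.{v} (C n)] [∀ n, Category.{v} (D n)]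
    (F : ∀ n, C (n + 1) ⥤ C n) (G : ∀ n, D (n + 1) ⥤ D n)
    (ν : ∀ n, C n ⥤ D n)
    (comm : ∀ n, F n ⋙ ν n ≅ ν (n + 1) ⋙ G n) :
    InvLim F ⥤ InvLim G where
  obj M :=
    { obj := fun n => (ν n).obj (M.obj n)
      iso := fun n => (comm n).symm.app (M.obj (n + 1)) ≪≫ (ν n).mapIso (M.iso n) }
  map {M N} α := ⟨fun n => (ν n).map (α.1 n), fun n => by
    dsimp
    have h1 := (comm n).inv.naturality (α.1 (n + 1))
    dsimp at h1
    rw [← Category.assoc, h1, Category.assoc, ← Functor.map_comp, α.2 n,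
      Functor.map_comp, Category.assoc]⟩
  map_id M := Subtype.ext (funext fun n => (ν n).map_id _)
  map_comp f g := Subtype.ext (funext fun n => (ν n).map_comp _ _)

/-!
Components of large index determine everything below them: going down, a component of an object
or morphism of `lim C_n` is recovered from the next one through `F_n`. Two objects of `lim C_n`
lie in a common filtered piece `I` by directedness, an object of `lim D_n` lies in some piece, and
for large `n` the functors `ν_n^I` are equivalences. Hence `lim ν_n` is faithful, and the
components of large index of morphisms and objects of `lim D_n` lift along `ν_n`; pushing the lifts
down through `F_n` gives fullness and essential surjectivity.
-/

namespace Nat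

def downwardRec {X : ℕ → Sort*} (N : ℕ) (top : ∀ n, N ≤ n → X n)
    (step : ∀ n, n < N → X (n + 1) → X n) (n : ℕ) : X n :=
  if h : N ≤ n then top n h else step n (by omega) (downwardRec N top step (n + 1))
termination_by N - n

variable {X : ℕ → Sort*} (N : ℕ) (top : ∀ n, N ≤ n → X n) (step : ∀ n, n < N → X (n + 1) → X n)

lemma downwardRec_of_le (n : ℕ) (hn : N ≤ n) : downwardRec N top step n = top n hn := by
  rw [downwardRec, dif_pos hn]

lemma downwardRec_of_lt (n : ℕ) (hn : n < N) :
    downwardRec N top step n = step n hn (downwardRec N top step (n + 1)) := by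
  rw [downwardRec, dif_neg (by omega)]

end Nat

namespace CategoryTheory

variable {E E' : Type*} [Category E] [Category E'] {P' : ObjectProperty E'}

noncomputable def Functor.FullyFaithful.ofLift (L : E ⥤ E') (hL : ∀ X, P' (L.obj X))
    [(P'.lift L hL).Full] [(P'.lift L hL).Faithful] : L.FullyFaithful :=
  ((ofFullyFaithful (P'.lift L hL)).comp P'.fullyFaithfulι).ofIso (P'.liftCompιIso L hL)

lemma ObjectProperty.essImage_of_essSurj_lift (L : E ⥤ E') (hL : ∀ X, P' (L.obj X))
    [(P'.lift L hL).EssSurj] {Y : E'} (hY : P' Y) : L.essImage Y :=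
  ⟨(P'.lift L hL).objPreimage ⟨Y, hY⟩,
    ⟨P'.ι.mapIso ((P'.lift L hL).objObjPreimageIso ⟨Y, hY⟩)⟩⟩

lemma Functor.FullyFaithful.map_bijective_of_ι_comp {P : ObjectProperty E} {Φ : E ⥤ E'}
    (h : (P.ι ⋙ Φ).FullyFaithful) {X Y : E} (hX : P X) (hY : P Y) :
    Function.Bijective (Φ.map : (X ⟶ Y) → _) :=
  (h.map_bijective ⟨X, hX⟩ ⟨Y, hY⟩).comp
    ⟨fun _ _ e => congrArg InducedCategory.Hom.hom e, ObjectProperty.homMk_surjective⟩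

end CategoryTheory

namespace InvLim

variable {C : ℕ → Type u} [∀ n, Category.{v} (C n)] {F : ∀ n, C (n + 1) ⥤ C n}

@[ext]
lemma hom_ext {M N : InvLim F} {α β : M ⟶ N} (h : ∀ n, α.1 n = β.1 n) : α = β :=
  Subtype.ext (funext h)

lemma hom_ext_of_ge {M N : InvLim F} {α β : M ⟶ N} (N₀ : ℕ)
    (h : ∀ n, N₀ ≤ n → α.1 n = β.1 n) : α = β := by
  ext n
  refine Nat.downwardRec N₀ h (fun n _ ih => ?_) n
  rw [← cancel_epi (M.iso n).hom, ← α.2 n, ← β.2 n, ih]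

lemma exists_hom_of_ge {M N : InvLim F} (N₀ : ℕ) (f : ∀ n, N₀ ≤ n → (M.obj n ⟶ N.obj n))
    (hf : ∀ n (hn : N₀ ≤ n),
      (F n).map (f (n + 1) (by omega)) ≫ (N.iso n).hom = (M.iso n).hom ≫ f n hn) :
    ∃ α : M ⟶ N, ∀ n (hn : N₀ ≤ n), α.1 n = f n hn := by
  let α : ∀ n, M.obj n ⟶ N.obj n :=
    Nat.downwardRec N₀ f fun n _ g => (M.iso n).inv ≫ (F n).map g ≫ (N.iso n).hom
  have hα : ∀ n (hn : N₀ ≤ n), α n = f n hn := Nat.downwardRec_of_le N₀ f _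
  refine ⟨⟨α, fun n => ?_⟩, hα⟩
  rcases lt_or_ge n N₀ with hn | hn
  · rw [show α n = _ from Nat.downwardRec_of_lt N₀ f _ n hn, Iso.hom_inv_id_assoc]
  · rw [hα n hn, hα (n + 1) (by omega), hf n hn]

def isoMk {M N : InvLim F} (e : ∀ n, M.obj n ≅ N.obj n)
    (h : ∀ n, (F n).map (e (n + 1)).hom ≫ (N.iso n).hom = (M.iso n).hom ≫ (e n).hom) :
    M ≅ N where
  hom := ⟨fun n => (e n).hom, h⟩
  inv := ⟨fun n => (e n).inv, fun n => by
    rw [Iso.eq_comp_inv, Category.assoc, ← h n, ← Functor.map_comp_assoc]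
    simp⟩
  hom_inv_id := hom_ext fun n => (e n).hom_inv_id
  inv_hom_id := hom_ext fun n => (e n).inv_hom_id

end InvLim

section limFunctor

variable {C D : ℕ → Type u} [∀ n, Category.{v} (C n)] [∀ n, Category.{v} (D n)]
  {F : ∀ n, C (n + 1) ⥤ C n} {G : ∀ n, D (n + 1) ⥤ D n} {ν : ∀ n, C n ⥤ D n}
  (comm : ∀ n, F n ⋙ ν n ≅ ν (n + 1) ⋙ G n)

lemma map_comp_iso_hom_eq_map_iso_hom_comp {M N : InvLim F}
    (β : (limFunctor F G ν comm).obj M ⟶ (limFunctor F G ν comm).obj N) {n : ℕ}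
    {f : M.obj (n + 1) ⟶ N.obj (n + 1)} {g : M.obj n ⟶ N.obj n}
    (hf : (ν (n + 1)).map f = β.1 (n + 1)) (hg : (ν n).map g = β.1 n) :
    (ν n).map ((F n).map f ≫ (N.iso n).hom) = (ν n).map ((M.iso n).hom ≫ g) := by
  have hβ := β.2 n
  simp only [limFunctor, Iso.trans_hom, Iso.symm_hom, Functor.mapIso_hom, Iso.app_hom,
    Category.assoc] at hβ
  rw [Functor.map_comp, Functor.map_comp, hg, ← Functor.comp_map,
    ← NatIso.naturality_2 (comm n) f, Functor.comp_map, hf, Category.assoc, Category.assoc, hβ]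
  simp

variable (P : ∀ n, ObjectProperty (C n)) (N₀ : ℕ)

lemma limFunctor_map_injective (hff : ∀ n, N₀ ≤ n → ((P n).ι ⋙ ν n).FullyFaithful)
    {M N : InvLim F} (hM : ∀ n, P n (M.obj n)) (hN : ∀ n, P n (N.obj n)) :
    Function.Injective ((limFunctor F G ν comm).map : (M ⟶ N) → _) := fun _ _ h =>
  InvLim.hom_ext_of_ge N₀ fun n hn =>
    ((hff n hn).map_bijective_of_ι_comp (hM n) (hN n)).1 (congrArg (fun γ => γ.1 n) h)

lemma limFunctor_map_surjective (hff : ∀ n, N₀ ≤ n → ((P n).ι ⋙ ν n).FullyFaithful)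
    (hP : ∀ n X, P (n + 1) X → P n ((F n).obj X))
    {M N : InvLim F} (hM : ∀ n, P n (M.obj n)) (hN : ∀ n, P n (N.obj n)) :
    Function.Surjective ((limFunctor F G ν comm).map : (M ⟶ N) → _) := by
  intro β
  choose f hf using fun n hn => ((hff n hn).map_bijective_of_ι_comp (hM n) (hN n)).2 (β.1 n)
  obtain ⟨α, hα⟩ := InvLim.exists_hom_of_ge N₀ f fun n hn =>
    ((hff n hn).map_bijective_of_ι_comp (hP n _ (hM (n + 1))) (hN n)).1
      (map_comp_iso_hom_eq_map_iso_hom_comp comm β (hf (n + 1) (by omega)) (hf n hn))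
  refine ⟨α, InvLim.hom_ext_of_ge N₀ fun n hn => ?_⟩
  rw [← hf n hn, ← hα n hn]
  rfl

lemma limFunctor_essImage_of_lifts (Y : InvLim G) (A : ∀ n, C n)
    (φ : ∀ n, (ν n).obj (A n) ≅ Y.obj n)
    (hA : ∀ n, ∃ e : (F n).obj (A (n + 1)) ≅ A n, (ν n).map e.hom ≫ (φ n).hom =
      (comm n).hom.app (A (n + 1)) ≫ (G n).map (φ (n + 1)).hom ≫ (Y.iso n).hom) :
    (limFunctor F G ν comm).essImage Y := by
  choose e he using hA
  exact ⟨⟨A, e⟩, ⟨InvLim.isoMk φ fun n => by simp [limFunctor, he]⟩⟩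

lemma limFunctor_essImage (hff : ∀ n, N₀ ≤ n → ((P n).ι ⋙ ν n).FullyFaithful)
    (hP : ∀ n X, P (n + 1) X → P n ((F n).obj X)) (Y : InvLim G)
    (hY : ∀ n, N₀ ≤ n → ((P n).ι ⋙ ν n).essImage (Y.obj n)) :
    (limFunctor F G ν comm).essImage Y := by
  choose A hA using hY
  obtain ⟨W, hW⟩ : ∃ W : ∀ n, Σ' A : (P n).FullSubcategory, (ν n).obj A.obj ≅ Y.obj n,
      ∀ n, n < N₀ → W n = ⟨⟨(F n).obj (W (n + 1)).1.obj, hP n _ (W (n + 1)).1.2⟩,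
        (comm n).app _ ≪≫ (G n).mapIso (W (n + 1)).2 ≪≫ Y.iso n⟩ :=
    ⟨_, Nat.downwardRec_of_lt (X := fun n => Σ' A : (P n).FullSubcategory, _ ≅ Y.obj n) N₀
      (fun n hn => ⟨A n hn, (hA n hn).some⟩) fun n _ W =>
        ⟨⟨(F n).obj W.1.obj, hP n _ W.1.2⟩, (comm n).app _ ≪≫ (G n).mapIso W.2 ≪≫ Y.iso n⟩⟩
  refine limFunctor_essImage_of_lifts comm Y (fun n => (W n).1.obj) (fun n => (W n).2) fun n => ?_
  rcases lt_or_ge n N₀ with hn | hn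
  · rw [hW n hn]
    exact ⟨Iso.refl _, by simp⟩
  · exact ⟨(P n).ι.mapIso ((hff n hn).preimageIso (X := ⟨_, hP n _ (W (n + 1)).1.2⟩)
      ((comm n).app _ ≪≫ (G n).mapIso (W (n + 1)).2 ≪≫ Y.iso n ≪≫ (W n).2.symm)),
      ((hff n hn).map_preimage _ =≫ (W n).2.hom).trans (by simp)⟩

end limFunctor

theorem statement16_general {ι : Type} [Preorder ι]
    -- `ι` is directed:
    (hdir : ∀ i j : ι, ∃ k, i ≤ k ∧ j ≤ k)
    {C D : ℕ → Type u} [∀ n, Category.{v} (C n)] [∀ n, Category.{v} (D n)]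
    (F : ∀ n, C (n + 1) ⥤ C n) (G : ∀ n, D (n + 1) ⥤ D n)
    -- the filtrations by strictly full subcategories, increasing in `ι`:
    (PC : ∀ n, ι → C n → Prop) (PD : ∀ n, ι → D n → Prop)
    (hPCmono : ∀ n {I J} (_ : I ≤ J) X, PC n I X → PC n J X)
    -- the structure functors are filtered:
    (hF : ∀ n I X, PC (n + 1) I X → PC n I ((F n).obj X))
    -- the morphism of sequences `(ν_n)`, commuting with the structure functors
    -- up to natural isomorphism, and filtered:
    (ν : ∀ n, C n ⥤ D n)
    (comm : ∀ n, F n ⋙ ν n ≅ ν (n + 1) ⋙ G n)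
    (hν : ∀ n I X, PC n I X → PD n I ((ν n).obj X))
    -- both inverse limits are unions of their filtered pieces:
    (hCunion : ∀ M : InvLim F, ∃ I, ∀ n, PC n I (M.obj n))
    (hDunion : ∀ M : InvLim G, ∃ I, ∀ n, PD n I (M.obj n))
    -- for each `I`, `ν_n^I` is eventually an equivalence:
    (hνeq : ∀ I : ι, ∃ N, ∀ n ≥ N,
      (ObjectProperty.lift (PD n I)
        (ObjectProperty.ι (PC n I) ⋙ ν n)
        (fun X => hν n I X.1 X.2)).IsEquivalence) :
    -- conclusion: `lim ν_n` is an equivalence of categories: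
    (limFunctor F G ν comm).IsEquivalence := by
  have hbij (M N : InvLim F) :
      Function.Bijective ((limFunctor F G ν comm).map : (M ⟶ N) → _) := by
    obtain ⟨I₁, hM⟩ := hCunion M
    obtain ⟨I₂, hN⟩ := hCunion N
    obtain ⟨I, hI₁, hI₂⟩ := hdir I₁ I₂
    obtain ⟨N₀, hN₀⟩ := hνeq I
    have hff (n : ℕ) (hn : N₀ ≤ n) : (ObjectProperty.ι (PC n I) ⋙ ν n).FullyFaithful :=
      have := hN₀ n hn; .ofLift _ fun X => hν n I X.1 X.2
    have hM' (n : ℕ) : PC n I (M.obj n) := hPCmono n hI₁ _ (hM n)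
    have hN' (n : ℕ) : PC n I (N.obj n) := hPCmono n hI₂ _ (hN n)
    exact ⟨limFunctor_map_injective comm _ N₀ hff hM' hN',
      limFunctor_map_surjective comm _ N₀ hff (fun n => hF n I) hM' hN'⟩
  refine
    { faithful := ⟨fun h => (hbij _ _).1 h⟩, full := ⟨(hbij _ _).2⟩, essSurj := ⟨fun Y => ?_⟩ }
  obtain ⟨I, hY⟩ := hDunion Y
  obtain ⟨N₀, hN₀⟩ := hνeq I
  exact limFunctor_essImage comm (fun n => PC n I) N₀
    (fun n hn => have := hN₀ n hn; .ofLift _ fun X => hν n I X.1 X.2) (fun n => hF n I) Y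
    fun n hn => have := hN₀ n hn; ObjectProperty.essImage_of_essSurj_lift _ _ (hY n)

theorem statement16 {ι : Type} [Preorder ι]
    -- `ι` is directed:
    (hdir : ∀ i j : ι, ∃ k, i ≤ k ∧ j ≤ k)
    {C D : ℕ → Type u} [∀ n, Category.{v} (C n)] [∀ n, Category.{v} (D n)]
    (F : ∀ n, C (n + 1) ⥤ C n) (G : ∀ n, D (n + 1) ⥤ D n)
    -- the filtrations by strictly full subcategories, increasing in `ι`:
    (PC : ∀ n, ι → C n → Prop) (PD : ∀ n, ι → D n → Prop)
    (hPCmono : ∀ n {I J} (_ : I ≤ J) X, PC n I X → PC n J X)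
    (hPDmono : ∀ n {I J} (_ : I ≤ J) X, PD n I X → PD n J X)
    (hPCiso : ∀ n I {X Y : C n}, (X ≅ Y) → PC n I X → PC n I Y)
    (hPDiso : ∀ n I {X Y : D n}, (X ≅ Y) → PD n I X → PD n I Y)
    -- the structure functors are filtered:
    (hF : ∀ n I X, PC (n + 1) I X → PC n I ((F n).obj X))
    (hG : ∀ n I X, PD (n + 1) I X → PD n I ((G n).obj X))
    -- the morphism of sequences `(ν_n)`, commuting with the structure functors
    -- up to natural isomorphism, and filtered:
    (ν : ∀ n, C n ⥤ D n)
    (comm : ∀ n, F n ⋙ ν n ≅ ν (n + 1) ⋙ G n)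
    (hν : ∀ n I X, PC n I X → PD n I ((ν n).obj X))
    -- both inverse limits are unions of their filtered pieces:
    (hCunion : ∀ M : InvLim F, ∃ I, ∀ n, PC n I (M.obj n))
    (hDunion : ∀ M : InvLim G, ∃ I, ∀ n, PD n I (M.obj n))
    -- for each `I`, `F_n^I` is eventually an equivalence:
    (hFeq : ∀ I : ι, ∃ N, ∀ n ≥ N,
      (ObjectProperty.lift (PC n I)
        (ObjectProperty.ι (PC (n + 1) I) ⋙ F n)
        (fun X => hF n I X.1 X.2)).IsEquivalence)
    -- for each `I`, `ν_n^I` is eventually an equivalence: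
    (hνeq : ∀ I : ι, ∃ N, ∀ n ≥ N,
      (ObjectProperty.lift (PD n I)
        (ObjectProperty.ι (PC n I) ⋙ ν n)
        (fun X => hν n I X.1 X.2)).IsEquivalence) :
    -- conclusion: `lim ν_n` is an equivalence of categories:
    (limFunctor F G ν comm).IsEquivalence :=
  statement16_general hdir F G PC PD hPCmono hF ν comm hν hCunion hDunion hνeq
end

section
/- Let (X, S) be a stratified complex variety with irreducible strata, and i : Y → X a closed embedding with an induced stratification T of Y such that S ↦ S ∩ Y is a bijection S → T and each i|_{S̄∩Y} : S̄ ∩ Y → S̄ is a normally nonsingular inclusion of fixed codimension c. Assume the simple S-constructible perverse sheaves are the IC_S (all strata simply connected). Then the functor [-c] i* : D^b(X, S) → D^b(Y, T) is t-exact for the perverse t-structures. -/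
/-!
Every object of the heart `Perv(X, S)` is an iterated extension of the `IC_S`, and `F` sends
each `IC_S` to the perverse sheaf `IC_{S∩Y}`; since `F` is triangulated and hearts are closed
under extensions, `F` maps `Perv(X, S)` into `Perv(Y, T)`. A triangulated functor preserving
hearts is t-exact on bounded objects: peeling off the top truncation `X → τ_{≥b} X`, whose
fibre has smaller amplitude, reduces an object of amplitude `[a, b]` to shifted heart objects.
-/

open CategoryTheory Limits Pretriangulated Triangulated

/-- Finite iterated extensions (in the heart) of a set of objects:
zero objects, objects of the set, closure under isomorphism and under
extensions given by distinguished triangles. -/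
inductive IterExt {D : Type*} [Category D] [HasZeroObject D] [HasShift D ℤ]
    [Preadditive D] [∀ n : ℤ, (shiftFunctor D n).Additive] [Pretriangulated D]
    (S : Set D) : D → Prop
  | zero (X : D) (hX : IsZero X) : IterExt S X
  | of (X : D) (hX : X ∈ S) : IterExt S X
  | isoClosed (X Y : D) (e : X ≅ Y) (hX : IterExt S X) : IterExt S Y
  | ext (T : Triangle D) (hT : T ∈ distTriang D)
      (h₁ : IterExt S T.obj₁) (h₃ : IterExt S T.obj₃) : IterExt S T.obj₂

lemma IterExt.map {D₁ D₂ : Type*} [Category D₁] [Category D₂]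
    [HasZeroObject D₁] [HasShift D₁ ℤ] [Preadditive D₁]
    [∀ n : ℤ, (shiftFunctor D₁ n).Additive] [Pretriangulated D₁]
    [HasZeroObject D₂] [HasShift D₂ ℤ] [Preadditive D₂]
    [∀ n : ℤ, (shiftFunctor D₂ n).Additive] [Pretriangulated D₂]
    (F : D₁ ⥤ D₂) [F.CommShift ℤ] [F.IsTriangulated] {S : Set D₁} {X : D₁}
    (h : IterExt S X) : IterExt (F.obj '' S) (F.obj X) := by
  induction h with
  | zero X hX => exact .zero _ (F.map_isZero hX)
  | of X hX => exact .of _ ⟨X, hX, rfl⟩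
  | isoClosed X Y e _ ih => exact .isoClosed _ _ (F.mapIso e) ih
  | ext T hT _ _ ih₁ ih₃ => exact .ext _ (F.map_distinguished T hT) ih₁ ih₃

namespace CategoryTheory.Triangulated.TStructure

variable {D : Type*} [Category D] [HasZeroObject D] [HasShift D ℤ] [Preadditive D]
    [∀ n : ℤ, (shiftFunctor D n).Additive] [Pretriangulated D] (t : TStructure D)

lemma heart_of_iterExt {S : Set D} (hS : ∀ Y ∈ S, t.heart Y) {X : D} (h : IterExt S X) :
    t.heart X := by
  induction h with
  | zero X hX => exact (t.mem_heart_iff X).2 ⟨t.isLE_of_isZero hX 0, t.isGE_of_isZero hX 0⟩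
  | of X hX => exact hS X hX
  | isoClosed X Y e _ ih => exact t.heart.prop_of_iso e ih
  | ext T hT _ _ ih₁ ih₃ =>
    rw [mem_heart_iff] at ih₁ ih₃ ⊢
    exact ⟨t.isLE₂ T hT 0 ih₁.1 ih₃.1, t.isGE₂ T hT 0 ih₁.2 ih₃.2⟩

lemma isLE_and_isGE_iff_heart_shift (X : D) (n : ℤ) :
    t.IsLE X n ∧ t.IsGE X n ↔ t.heart (X⟦n⟧) := by
  rw [mem_heart_iff, t.isLE_shift_iff X n n 0, t.isGE_shift_iff X n n 0]

-- Mathlib's unconditional instances for these two facts need the octahedral axiom; with the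
-- bounds on `a`, a rotation of the truncation triangle suffices.
lemma isGE_truncLT_obj_of_isGE (X : D) (a b : ℤ) (hab : a ≤ b + 1) [t.IsGE X a] :
    t.IsGE ((t.truncLT b).obj X) a := by
  have := t.isGE_shift ((t.truncGE b).obj X) b (-1) (b + 1)
  have hGE := t.isGE_of_ge (((t.truncGE b).obj X)⟦(-1 : ℤ)⟧) a (b + 1)
  exact t.isGE₂ _ (inv_rot_of_distTriang _ (t.triangleLTGE_distinguished b X)) a hGE ‹_›

lemma isLE_truncGE_obj_of_isLE (X : D) (a b : ℤ) (hab : a ≤ b + 2) [t.IsLE X b] :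
    t.IsLE ((t.truncGE a).obj X) b := by
  have := t.isLE_shift ((t.truncLT a).obj X) (a - 1) 1 (a - 2)
  have hLE := t.isLE_of_le (((t.truncLT a).obj X)⟦(1 : ℤ)⟧) (a - 2) b
  exact t.isLE₂ _ (rot_of_distTriang _ (t.triangleLTGE_distinguished a X)) b ‹_› hLE

end CategoryTheory.Triangulated.TStructure

namespace CategoryTheory.Functor

variable {D₁ D₂ : Type*} [Category D₁] [Category D₂]
    [HasZeroObject D₁] [HasShift D₁ ℤ] [Preadditive D₁]
    [∀ n : ℤ, (shiftFunctor D₁ n).Additive] [Pretriangulated D₁]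
    [HasZeroObject D₂] [HasShift D₂ ℤ] [Preadditive D₂]
    [∀ n : ℤ, (shiftFunctor D₂ n).Additive] [Pretriangulated D₂]
    {t₁ : TStructure D₁} {t₂ : TStructure D₂} (F : D₁ ⥤ D₂) [F.CommShift ℤ]

lemma isLE_and_isGE_map_of_map_heart (hF : ∀ X, t₁.heart X → t₂.heart (F.obj X))
    (X : D₁) (n : ℤ) [t₁.IsLE X n] [t₁.IsGE X n] :
    t₂.IsLE (F.obj X) n ∧ t₂.IsGE (F.obj X) n := by
  rw [t₂.isLE_and_isGE_iff_heart_shift]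
  exact t₂.heart.prop_of_iso ((F.commShiftIso n).app X)
    (hF _ ((t₁.isLE_and_isGE_iff_heart_shift X n).1 ⟨‹_›, ‹_›⟩))

lemma isGE_and_isLE_map_of_map_heart [F.IsTriangulated]
    (hF : ∀ X, t₁.heart X → t₂.heart (F.obj X)) (X : D₁) (a b : ℤ) (hab : a ≤ b)
    [t₁.IsGE X a] [t₁.IsLE X b] : t₂.IsGE (F.obj X) a ∧ t₂.IsLE (F.obj X) b := by
  induction b, hab using Int.leInduction generalizing X with
  | base => exact (F.isLE_and_isGE_map_of_map_heart hF X a).symm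
  | succ b hab ih =>
    have := t₁.isGE_truncLT_obj_of_isGE X a (b + 1) (by lia)
    have := t₁.isLE_truncGE_obj_of_isLE X (b + 1) (b + 1) (by lia)
    set X₁ := (t₁.truncLT (b + 1)).obj X
    set X₃ := (t₁.truncGE (b + 1)).obj X
    obtain ⟨hGE₁, hLE₁⟩ := ih X₁
    obtain ⟨hLE₃, hGE₃⟩ := F.isLE_and_isGE_map_of_map_heart hF X₃ (b + 1)
    have hT := F.map_distinguished _ (t₁.triangleLTGE_distinguished (b + 1) X)
    exact ⟨t₂.isGE₂ _ hT a hGE₁ (t₂.isGE_of_ge (F.obj X₃) a (b + 1)),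
      t₂.isLE₂ _ hT (b + 1) (t₂.isLE_of_le (F.obj X₁) b (b + 1)) hLE₃⟩

lemma isLE_map_of_map_heart [F.IsTriangulated]
    (hF : ∀ X, t₁.heart X → t₂.heart (F.obj X)) {X : D₁} (hX : t₁.plus X) (n : ℤ)
    [t₁.IsLE X n] :
    t₂.IsLE (F.obj X) n := by
  obtain ⟨a, _⟩ := hX
  have := t₁.isGE_of_ge X (min a n) a (min_le_left a n)
  exact (F.isGE_and_isLE_map_of_map_heart hF X (min a n) n (min_le_right a n)).2

lemma isGE_map_of_map_heart [F.IsTriangulated]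
    (hF : ∀ X, t₁.heart X → t₂.heart (F.obj X)) {X : D₁} (hX : t₁.minus X) (n : ℤ)
    [t₁.IsGE X n] :
    t₂.IsGE (F.obj X) n := by
  obtain ⟨b, _⟩ := hX
  have := t₁.isLE_of_le X b (max b n) (le_max_left b n)
  exact (F.isGE_and_isLE_map_of_map_heart hF X n (max b n) (le_max_right b n)).1

end CategoryTheory.Functor

theorem statement19 {D₁ D₂ : Type*} [Category D₁] [Category D₂]
    [HasZeroObject D₁] [HasShift D₁ ℤ] [Preadditive D₁]
    [∀ n : ℤ, (shiftFunctor D₁ n).Additive] [Pretriangulated D₁]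
    [HasZeroObject D₂] [HasShift D₂ ℤ] [Preadditive D₂]
    [∀ n : ℤ, (shiftFunctor D₂ n).Additive] [Pretriangulated D₂]
    -- the perverse t-structures on `D^b(X,S)` and `D^b(Y,T)`:
    (t₁ : TStructure D₁) (t₂ : TStructure D₂)
    -- the triangulated functor `F = [-c] i*`:
    (F : D₁ ⥤ D₂) [F.CommShift ℤ] [F.IsTriangulated]
    -- the (finitely many) strata and intersection cohomology complexes:
    {σ : Type} [Finite σ] (IC : σ → D₁) (ICY : σ → D₂)
    -- each `IC_S` lies in the heart `Perv(X, S)`: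
    (hIC : ∀ s, t₁.le 0 (IC s) ∧ t₁.ge 0 (IC s))
    -- the `IC_S` are the simple objects of the artinian heart: every object of
    -- the heart is a finite iterated extension of the `IC_S`:
    (hheart : ∀ X : D₁, t₁.le 0 X → t₁.ge 0 X → IterExt (Set.range IC) X)
    -- the t-structure is bounded:
    (hbound : ∀ X : D₁, ∃ a b : ℤ, t₁.ge a X ∧ t₁.le b X)
    -- normal nonsingularity: `[-c]i*(IC_S) ≅ IC_{S∩Y}`, an object of the heart
    -- `Perv(Y, T)`:
    (hICY : ∀ s, t₂.le 0 (ICY s) ∧ t₂.ge 0 (ICY s))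
    (hnn : ∀ s, Nonempty (F.obj (IC s) ≅ ICY s)) :
    -- conclusion: `F = [-c] i*` is t-exact:
    ∀ X : D₁, (t₁.le 0 X → t₂.le 0 (F.obj X)) ∧ (t₁.ge 0 X → t₂.ge 0 (F.obj X)) := by
  have hmapIC : ∀ Y ∈ F.obj '' Set.range IC, t₂.heart Y := by
    rintro _ ⟨_, ⟨s, rfl⟩, rfl⟩
    exact t₂.heart.prop_of_iso (hnn s).some.symm (hICY s)
  have hF : ∀ X, t₁.heart X → t₂.heart (F.obj X) := fun X hX ↦
    t₂.heart_of_iterExt hmapIC ((hheart X hX.1 hX.2).map F)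
  intro X
  obtain ⟨a, b, ha, hb⟩ := hbound X
  simp only [TStructure.le_iff_isLE, TStructure.ge_iff_isGE] at ha hb ⊢
  exact ⟨fun _ ↦ F.isLE_map_of_map_heart hF ⟨a, ha⟩ 0,
    fun _ ↦ F.isGE_map_of_map_heart hF ⟨b, hb⟩ 0⟩
end
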